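/- arXiv:2301.06102 — 4 statements merged into one kernel-verified Lean document; each statement's English description precedes it below -/
import Mathlib

section
/- Let f : P_m → P_n be a holomorphic mapping between open unit polydiscs with f(0) = 0, and write the first-order Taylor coefficients a_{il} = ∂f_l/∂z^i (0). Then the linear map z ↦ (Σ_i a_{i1} z^i, ..., Σ_i a_{in} z^i) maps P_m into P_n; equivalently, Σ_{i=1}^m |∂f_l/∂z^i(0)| ≤ 1 for each l = 1,...,n. -/
/- The sup norm on `Fin m → ℂ` makes the polydisc the unit ball, so the Schwarz lemma for maps
between unit balls of normed spaces gives `‖f'(0)‖ ≤ 1` for the operator norm.  In the sup norm,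
the functional `z ↦ ∑ aᵢ zᵢ` has operator norm at least `∑ |aᵢ|`, as its value at
`zᵢ = exp (-i arg aᵢ)` shows. -/

def polydisc (m : ℕ) : Set (Fin m → ℂ) := {z | ∀ l, ‖z l‖ < 1}

open Metric

theorem polydisc_eq_ball (m : ℕ) : polydisc m = ball 0 1 := by
  ext z
  simp [polydisc, pi_norm_lt_iff one_pos]

theorem Complex.mul_exp_neg_arg_mul_I (a : ℂ) : a * exp (-(arg a * I)) = ‖a‖ := by
  nth_rw 1 [← norm_mul_exp_arg_mul_I a]
  rw [mul_assoc, ← exp_add, add_neg_cancel, exp_zero, mul_one]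

theorem ContinuousLinearMap.sum_norm_apply_single_le_opNorm {ι : Type*} [Fintype ι]
    [DecidableEq ι] (φ : (ι → ℂ) →L[ℂ] ℂ) : ∑ i, ‖φ (Pi.single i 1)‖ ≤ ‖φ‖ := by
  set a : ι → ℂ := fun i => φ (Pi.single i 1)
  set w : ι → ℂ := fun i => Complex.exp (-(Complex.arg (a i) * Complex.I))
  have hw : ‖w‖ ≤ 1 := by
    refine (pi_norm_le_iff_of_nonneg zero_le_one).2 fun i => le_of_eq ?_
    simp only [w]
    rw [← neg_mul, ← Complex.ofReal_neg, Complex.norm_exp_ofReal_mul_I]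
  have hφw : φ w = ∑ i, a i * w i := by
    conv_lhs => rw [pi_eq_sum_univ' w]
    simp only [map_sum, map_smul, smul_eq_mul, mul_comm (w _), a]
  calc ∑ i, ‖a i‖ = ‖φ w‖ := by
        simp only [hφw, w, Complex.mul_exp_neg_arg_mul_I]
        rw [← Complex.ofReal_sum, Complex.norm_real, Real.norm_of_nonneg (by positivity)]
    _ ≤ ‖φ‖ * ‖w‖ := φ.le_opNorm w
    _ ≤ ‖φ‖ := mul_le_of_le_one_right (norm_nonneg φ) hw

/-- If `f : P_m → P_n` is holomorphic with `f 0 = 0`, then its linear part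
at `0` maps `P_m` into `P_n`; equivalently the ℓ¹ norm of each column of the Jacobian at
`0` is at most 1. -/
theorem linear_part_maps_polydisc (m n : ℕ) (f : (Fin m → ℂ) → (Fin n → ℂ))
    (hf : DifferentiableOn ℂ f (polydisc m))
    (hmaps : ∀ z ∈ polydisc m, f z ∈ polydisc n)
    (h0 : f 0 = 0) :
    (∀ z ∈ polydisc m,
      (fun l => ∑ i, fderiv ℂ f 0 (Pi.single i 1) l * z i) ∈ polydisc n) ∧
    ∀ l, ∑ i, ‖fderiv ℂ f 0 (Pi.single i 1) l‖ ≤ 1 := by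
  set D := fderiv ℂ f 0
  simp only [polydisc_eq_ball] at hf hmaps ⊢
  have hD : ‖D‖ ≤ 1 := by
    refine Complex.norm_fderiv_le_one_of_mapsTo_ball hf (fun z hz => ?_) one_pos
    rw [h0]
    exact ball_subset_closedBall (hmaps z hz)
  have hexpand (z : Fin m → ℂ) : (fun l => ∑ i, D (Pi.single i 1) l * z i) = D z := by
    conv_rhs => rw [pi_eq_sum_univ' z]
    ext l
    simp only [map_sum, map_smul, Finset.sum_apply, Pi.smul_apply, smul_eq_mul, mul_comm]
  refine ⟨fun z hz => ?_, fun l => ?_⟩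
  · rw [mem_ball_zero_iff] at hz
    rw [hexpand, mem_ball_zero_iff]
    calc ‖D z‖ ≤ 1 * ‖z‖ := D.le_of_opNorm_le hD z
      _ < 1 := by rwa [one_mul]
  · calc ∑ i, ‖D (Pi.single i 1) l‖ = ∑ i, ‖(ContinuousLinearMap.proj l ∘L D) (Pi.single i 1)‖ :=
          rfl
      _ ≤ ‖ContinuousLinearMap.proj l ∘L D‖ :=
          ContinuousLinearMap.sum_norm_apply_single_le_opNorm _
      _ ≤ ‖D‖ := ContinuousLinearMap.opNorm_le_bound _ (norm_nonneg D)
          fun z => (norm_le_pi_norm (D z) l).trans (D.le_opNorm z)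
      _ ≤ 1 := hD
end

section
/- Let f : P_m → P_n be holomorphic with f(0) = 0, and define φ_{t,k}, φ̃_{t̃,k̃} as above on C^m and C^n respectively. Then for every z ∈ P_m, φ̃_{t̃,k̃}^2(f(z)) ≤ ((n + t̃ n^{1/k̃})/(1+t̃)) · φ_{t,k}^2(z). -/
noncomputable def phiSq (m : ℕ) (t : ℝ) (k : ℕ) (v : Fin m → ℂ) : ℝ :=
  (1/(1+t)) * (∑ l, ‖v l‖^2 + t * (∑ l, ‖v l‖^(2*k)) ^ ((1:ℝ)/k))

/-!
The polydisc is the unit ball of the sup norm on `ℂ^m`, so the Schwarz lemma for holomorphic maps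
between normed spaces gives `‖f z‖_∞ ≤ ‖z‖_∞`. It remains to compare `φ²` with the sup norm:
`‖v‖_∞² ≤ φ²_{t,k}(v)` and `φ̃²_{t̃,k̃}(w) ≤ ((n + t̃ n^{1/k̃})/(1+t̃)) ‖w‖_∞²` on `ℂ^n`.
-/

open Metric

theorem pow_two_mul_rpow_one_div (a : ℝ) {k : ℕ} (hk : k ≠ 0) :
    (a ^ (2 * k)) ^ ((1 : ℝ) / k) = a ^ 2 := by
  rw [pow_mul, one_div, Real.pow_rpow_inv_natCast (by positivity) hk]

section phiSq

variable {m : ℕ} {t : ℝ} {k : ℕ}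

theorem phiSq_le_mul_sq_norm (ht : 0 ≤ t) (hk : k ≠ 0) (v : Fin m → ℂ) :
    phiSq m t k v ≤ ((m + t * (m : ℝ) ^ ((1 : ℝ) / k)) / (1 + t)) * ‖v‖ ^ 2 := by
  have hsum : ∀ p : ℕ, ∑ l, ‖v l‖ ^ p ≤ m * ‖v‖ ^ p := fun p => by
    simpa using Finset.sum_le_card_nsmul Finset.univ (fun l => ‖v l‖ ^ p) (‖v‖ ^ p)
      fun l _ => pow_le_pow_left₀ (norm_nonneg _) (norm_le_pi_norm v l) p
  have hroot : (∑ l, ‖v l‖ ^ (2 * k)) ^ ((1 : ℝ) / k) ≤ (m : ℝ) ^ ((1 : ℝ) / k) * ‖v‖ ^ 2 := by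
    calc (∑ l, ‖v l‖ ^ (2 * k)) ^ ((1 : ℝ) / k)
        ≤ ((m : ℝ) * ‖v‖ ^ (2 * k)) ^ ((1 : ℝ) / k) := by gcongr; exact hsum _
      _ = (m : ℝ) ^ ((1 : ℝ) / k) * ‖v‖ ^ 2 := by
        rw [Real.mul_rpow (by positivity) (by positivity),
          pow_two_mul_rpow_one_div ‖v‖ hk]
  calc phiSq m t k v
      ≤ 1 / (1 + t) * (m * ‖v‖ ^ 2 + t * ((m : ℝ) ^ ((1 : ℝ) / k) * ‖v‖ ^ 2)) := by
        unfold phiSq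
        gcongr
        exact hsum 2
    _ = ((m + t * (m : ℝ) ^ ((1 : ℝ) / k)) / (1 + t)) * ‖v‖ ^ 2 := by ring

theorem sq_norm_apply_le_phiSq (ht : 0 ≤ t) (hk : k ≠ 0) (v : Fin m → ℂ) (l : Fin m) :
    ‖v l‖ ^ 2 ≤ phiSq m t k v := by
  have hsq : ‖v l‖ ^ 2 ≤ ∑ l, ‖v l‖ ^ 2 :=
    Finset.single_le_sum (f := fun l => ‖v l‖ ^ 2) (fun _ _ => by positivity)
      (Finset.mem_univ l)
  have hroot : ‖v l‖ ^ 2 ≤ (∑ l, ‖v l‖ ^ (2 * k)) ^ ((1 : ℝ) / k) := by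
    rw [← pow_two_mul_rpow_one_div ‖v l‖ hk]
    gcongr
    exact Finset.single_le_sum (f := fun l => ‖v l‖ ^ (2 * k)) (fun _ _ => by positivity)
      (Finset.mem_univ l)
  calc ‖v l‖ ^ 2 = 1 / (1 + t) * (‖v l‖ ^ 2 + t * ‖v l‖ ^ 2) := by field_simp
    _ ≤ phiSq m t k v := by unfold phiSq; gcongr

theorem sq_norm_le_phiSq (ht : 0 ≤ t) (hk : k ≠ 0) (v : Fin m → ℂ) :
    ‖v‖ ^ 2 ≤ phiSq m t k v := by
  have hnonneg : 0 ≤ phiSq m t k v := by unfold phiSq; positivity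
  refine (Real.le_sqrt (norm_nonneg v) hnonneg).1 <|
    (pi_norm_le_iff_of_nonneg (Real.sqrt_nonneg _)).2 fun l => ?_
  exact Real.le_sqrt_of_sq_le (sq_norm_apply_le_phiSq ht hk v l)

end phiSq

/-- Schwarz lemma at the origin: if `f : P_m → P_n` is holomorphic with
`f 0 = 0`, then `φ̃²_{t̃,k̃}(f(z)) ≤ ((n + t̃ n^{1/k̃})/(1+t̃)) · φ²_{t,k}(z)`. -/
theorem schwarz_phi (m n : ℕ) (t tt : ℝ) (ht : 0 ≤ t) (htt : 0 ≤ tt)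
    (k kt : ℕ) (hk : 2 ≤ k) (hkt : 2 ≤ kt)
    (f : (Fin m → ℂ) → (Fin n → ℂ))
    (hf : DifferentiableOn ℂ f (polydisc m))
    (hmaps : ∀ z ∈ polydisc m, f z ∈ polydisc n)
    (h0 : f 0 = 0) :
    ∀ z ∈ polydisc m,
      phiSq n tt kt (f z) ≤ ((n + tt * (n:ℝ) ^ ((1:ℝ)/kt))/(1+tt)) * phiSq m t k z := by
  intro z hz
  rw [polydisc_eq_ball] at hf hmaps hz
  have hschwarz : ‖f z‖ ≤ ‖z‖ :=
    Complex.norm_le_norm_of_mapsTo_ball hf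
      (fun w hw => ball_subset_closedBall (polydisc_eq_ball n ▸ hmaps w hw)) h0
      (mem_ball_zero_iff.1 hz)
  calc phiSq n tt kt (f z) ≤ ((n + tt * (n:ℝ) ^ ((1:ℝ)/kt))/(1+tt)) * ‖f z‖ ^ 2 :=
        phiSq_le_mul_sq_norm htt (by omega) (f z)
    _ ≤ ((n + tt * (n:ℝ) ^ ((1:ℝ)/kt))/(1+tt)) * ‖z‖ ^ 2 := by gcongr
    _ ≤ ((n + tt * (n:ℝ) ^ ((1:ℝ)/kt))/(1+tt)) * phiSq m t k z := by
        gcongr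
        exact sq_norm_le_phiSq ht (by omega) z
end

section
/- Let f : P_m → P_n be holomorphic with f(0) = 0 and fix l ∈ {1,...,m}. For nonzero v = (0,...,0,v^l,0,...,0) ∈ C^m, equality F̃_{t̃,k̃}^2(0; df(0)v) = ((n + t̃ n^{1/k̃})/(1+t̃)) · F_{t,k}^2(0;v) holds if and only if f_j(0,...,0,z^l,0,...,0) = e^{iθ_j} z^l for some real θ_j, for every j = 1,...,n. -/
noncomputable def FSq (m : ℕ) (t : ℝ) (k : ℕ) (z v : Fin m → ℂ) : ℝ :=
  (1/(1+t)) * (∑ l, ‖v l‖^2 / (1 - ‖z l‖^2)^2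
    + t * (∑ l, ‖v l‖^(2*k) / (1 - ‖z l‖^2)^(2*k)) ^ ((1:ℝ)/k))

/-! Restrict `f` to the `l`-th coordinate disc and look at its `j`-th component: each such
slice is a self-map of the unit disc fixing `0`, with derivative `df(0) eₗ` in coordinate `j`.
By the Schwarz lemma all these coordinates have modulus `≤ 1`. At the origin `F̃²` is
`‖c‖²`-homogeneous and `F²(0; c eₗ) = ‖c‖²`, so the equality says that `F̃²(0; df(0) eₗ)` attains
its maximum `(n + t̃ n^{1/k̃})/(1+t̃)` over the closed unit polydisc; this happens exactly when
every coordinate has modulus one, i.e. by the equality case of the Schwarz lemma, when every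
slice is a rotation. -/

open Metric Set

lemma FSq_zero_apply (n : ℕ) (t : ℝ) (k : ℕ) (v : Fin n → ℂ) :
    FSq n t k 0 v = (1/(1+t)) * (∑ j, ‖v j‖^2 + t * (∑ j, ‖v j‖^(2*k)) ^ ((1:ℝ)/k)) := by
  simp [FSq]

lemma FSq_zero_smul (n : ℕ) (t : ℝ) {k : ℕ} (hk : k ≠ 0) (c : ℂ) (v : Fin n → ℂ) :
    FSq n t k 0 (c • v) = ‖c‖^2 * FSq n t k 0 v := by
  have hpow : ∑ j, ‖(c • v) j‖^(2*k) = (‖c‖^2)^k * ∑ j, ‖v j‖^(2*k) := by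
    simp only [Pi.smul_apply, smul_eq_mul, norm_mul, mul_pow, ← pow_mul, Finset.mul_sum]
  rw [FSq_zero_apply, FSq_zero_apply, hpow,
    Real.mul_rpow (by positivity) (by positivity), one_div (k : ℝ),
    Real.pow_rpow_inv_natCast (by positivity) hk]
  simp only [Pi.smul_apply, smul_eq_mul, norm_mul, mul_pow, ← Finset.mul_sum]
  ring

lemma FSq_zero_single_one (m : ℕ) {t : ℝ} (ht : 1 + t ≠ 0) (k : ℕ) (l : Fin m) :
    FSq m t k 0 (Pi.single l 1) = 1 := by
  have hsum : ∀ p ≠ 0, ∑ i, ‖(Pi.single l 1 : Fin m → ℂ) i‖ ^ p = 1 := fun p hp => by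
    simp [Pi.single_apply, apply_ite, hp]
  rcases eq_or_ne k 0 with rfl | hk
  · simp [FSq_zero_apply, hsum, ht]
  · simp [FSq_zero_apply, hsum, hk, ht]

lemma sum_pow_eq_card_iff {ι : Type*} [Fintype ι] {x : ι → ℝ} {p : ℕ} (hp : p ≠ 0)
    (hx₀ : ∀ i, 0 ≤ x i) (hx₁ : ∀ i, x i ≤ 1) :
    ∑ i, x i ^ p = Fintype.card ι ↔ ∀ i, x i = 1 := by
  rw [← Finset.card_univ, Finset.card_eq_sum_ones, Nat.cast_sum, Nat.cast_one,
    Finset.sum_eq_sum_iff_of_le fun i _ => pow_le_one₀ (hx₀ i) (hx₁ i)]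
  simp only [Finset.mem_univ, true_implies, pow_eq_one_iff_of_nonneg (hx₀ _) hp]

lemma sum_pow_le_card {ι : Type*} [Fintype ι] {x : ι → ℝ} (p : ℕ)
    (hx₀ : ∀ i, 0 ≤ x i) (hx₁ : ∀ i, x i ≤ 1) :
    ∑ i, x i ^ p ≤ Fintype.card ι := by
  simpa using Finset.sum_le_sum fun i (_ : i ∈ Finset.univ) => pow_le_one₀ (hx₀ i) (hx₁ i)

lemma FSq_zero_eq_iff {n : ℕ} {t : ℝ} (ht : 0 ≤ t) (k : ℕ) {v : Fin n → ℂ}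
    (hv : ∀ j, ‖v j‖ ≤ 1) :
    FSq n t k 0 v = (n + t * (n:ℝ) ^ ((1:ℝ)/k)) / (1+t) ↔ ∀ j, ‖v j‖ = 1 := by
  have hx₀ : ∀ j, 0 ≤ ‖v j‖ := fun j => norm_nonneg _
  rw [FSq_zero_apply, one_div_mul_eq_div, div_left_inj' (by positivity)]
  constructor
  · intro h
    have hsq := sum_pow_le_card 2 hx₀ hv
    have hroot : (∑ j, ‖v j‖^(2*k)) ^ ((1:ℝ)/k) ≤ (n:ℝ) ^ ((1:ℝ)/k) := by
      refine Real.rpow_le_rpow (by positivity) ?_ (by positivity)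
      simpa using sum_pow_le_card (2*k) hx₀ hv
    rw [Fintype.card_fin] at hsq
    refine (sum_pow_eq_card_iff two_ne_zero hx₀ hv).mp ?_
    rw [Fintype.card_fin]
    nlinarith [mul_le_mul_of_nonneg_left hroot ht]
  · intro h
    simp [h]

lemma Complex.norm_deriv_eq_one_iff_exists_rotation {g : ℂ → ℂ}
    (hd : DifferentiableOn ℂ g (ball 0 1)) (hmaps : MapsTo g (ball 0 1) (closedBall 0 1))
    (h0 : g 0 = 0) :
    ‖deriv g 0‖ = 1 ↔ ∃ θ : ℝ, ∀ w : ℂ, ‖w‖ < 1 → g w = Complex.exp (θ * Complex.I) * w := by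
  constructor
  · intro hg
    have haff := Complex.affine_of_mapsTo_ball_of_norm_dslope_eq_div hd (by rwa [h0])
      (mem_ball_self one_pos) (by rw [dslope_same, hg, div_one])
    refine ⟨(deriv g 0).arg, fun w hw => ?_⟩
    have hrot := Complex.norm_mul_exp_arg_mul_I (deriv g 0)
    rw [hg, Complex.ofReal_one, one_mul] at hrot
    rw [haff (mem_ball_zero_iff.mpr hw), hrot]
    simp [h0, mul_comm]
  · rintro ⟨θ, hθ⟩
    have hev : g =ᶠ[nhds 0] fun w => Complex.exp (θ * Complex.I) * w := by
      filter_upwards [ball_mem_nhds (0:ℂ) one_pos] with w hw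
      exact hθ w (mem_ball_zero_iff.mp hw)
    rw [hev.deriv_eq, deriv_const_mul_field']
    simp

lemma isOpen_polydisc (m : ℕ) : IsOpen (polydisc m) := by
  have : polydisc m = ⋂ i, (fun z : Fin m → ℂ => z i) ⁻¹' ball 0 1 := by
    ext z
    simp [polydisc]
  rw [this]
  exact isOpen_iInter_of_finite fun i => isOpen_ball.preimage (continuous_apply i)

lemma single_mem_polydisc {m : ℕ} (l : Fin m) {w : ℂ} (hw : ‖w‖ < 1) :
    Pi.single l w ∈ polydisc m := by
  intro i
  rcases eq_or_ne i l with rfl | h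
  · simpa using hw
  · simp [Pi.single_eq_of_ne h]

def axisSlice {m n : ℕ} (f : (Fin m → ℂ) → (Fin n → ℂ)) (l : Fin m) (j : Fin n) (w : ℂ) : ℂ :=
  f (Pi.single l w) j

section axisSlice

variable {m n : ℕ} {f : (Fin m → ℂ) → (Fin n → ℂ)} (l : Fin m) (j : Fin n)

lemma hasDerivAt_piSingle (w : ℂ) :
    HasDerivAt (fun w : ℂ => (Pi.single l w : Fin m → ℂ)) (Pi.single l 1) w := by
  have : (fun w : ℂ => (Pi.single l w : Fin m → ℂ)) = fun w => w • Pi.single l 1 := by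
    funext w
    rw [← Pi.single_smul', smul_eq_mul, mul_one]
  rw [this]
  simpa using (hasDerivAt_id w).smul_const (Pi.single l (1 : ℂ) : Fin m → ℂ)

lemma differentiableOn_axisSlice (hf : DifferentiableOn ℂ f (polydisc m)) :
    DifferentiableOn ℂ (axisSlice f l j) (ball 0 1) := by
  have hline : DifferentiableOn ℂ (fun w : ℂ => f (Pi.single l w)) (ball 0 1) :=
    hf.comp (fun w _ => (hasDerivAt_piSingle l w).differentiableAt.differentiableWithinAt)
      fun w hw => single_mem_polydisc l (mem_ball_zero_iff.mp hw)
  exact fun w hw => differentiableWithinAt_pi.mp (hline w hw) j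

lemma mapsTo_axisSlice (hmaps : ∀ z ∈ polydisc m, f z ∈ polydisc n) :
    MapsTo (axisSlice f l j) (ball 0 1) (closedBall 0 1) := fun _ hw =>
  mem_closedBall_zero_iff.mpr (hmaps _ (single_mem_polydisc l (mem_ball_zero_iff.mp hw)) j).le

lemma axisSlice_zero (h0 : f 0 = 0) : axisSlice f l j 0 = 0 := by
  simp [axisSlice, h0]

lemma deriv_axisSlice_zero (hf : DifferentiableAt ℂ f 0) :
    deriv (axisSlice f l j) 0 = fderiv ℂ f 0 (Pi.single l 1) j := by
  have hf' : HasFDerivAt f (fderiv ℂ f 0) (Pi.single l (0 : ℂ)) := by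
    simpa using hf.hasFDerivAt
  exact (hasDerivAt_pi.mp (hf'.comp_hasDerivAt 0 (hasDerivAt_piSingle l 0)) j).deriv

end axisSlice

/-- For `f : P_m → P_n` holomorphic with `f 0 = 0` and a vector `v`
supported in the `l`-th coordinate, equality in the Schwarz lemma at the origin holds
iff `f_j(0,...,z^l,...,0) = e^{iθⱼ} z^l` for each `j`. -/
theorem schwarz_FSq_equality_iff (m n : ℕ) (t tt : ℝ) (ht : 0 ≤ t) (htt : 0 ≤ tt)
    (k kt : ℕ) (hk : 2 ≤ k) (hkt : 2 ≤ kt)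
    (f : (Fin m → ℂ) → (Fin n → ℂ))
    (hf : DifferentiableOn ℂ f (polydisc m))
    (hmaps : ∀ z ∈ polydisc m, f z ∈ polydisc n)
    (h0 : f 0 = 0) (l : Fin m) (c : ℂ) (hc : c ≠ 0) :
    FSq n tt kt 0 (fderiv ℂ f 0 (Pi.single l c))
        = ((n + tt * (n:ℝ) ^ ((1:ℝ)/kt))/(1+tt)) * FSq m t k 0 (Pi.single l c) ↔
      ∀ j : Fin n, ∃ θ : ℝ, ∀ w : ℂ, ‖w‖ < 1 →
        f (Pi.single l w) j = Complex.exp (θ * Complex.I) * w := by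
  have hf0 : DifferentiableAt ℂ f 0 :=
    hf.differentiableAt ((isOpen_polydisc m).mem_nhds fun i => by simp)
  have hderiv := fun j => deriv_axisSlice_zero (f := f) l j hf0
  have hschwarz := fun j => Complex.norm_deriv_eq_one_iff_exists_rotation
    (differentiableOn_axisSlice l j hf) (mapsTo_axisSlice l j hmaps) (axisSlice_zero l j h0)
  have hbound : ∀ j, ‖fderiv ℂ f 0 (Pi.single l 1) j‖ ≤ 1 := fun j =>
    hderiv j ▸ Complex.norm_deriv_le_one_of_mapsTo_ball (differentiableOn_axisSlice l j hf)
      (by rw [axisSlice_zero l j h0]; exact mapsTo_axisSlice l j hmaps) one_pos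
  have hsingle : (Pi.single l c : Fin m → ℂ) = c • Pi.single l 1 := by
    rw [← Pi.single_smul', smul_eq_mul, mul_one]
  rw [hsingle, map_smul, FSq_zero_smul n tt (by omega), FSq_zero_smul m t (by omega),
    FSq_zero_single_one m (by positivity), mul_one, mul_comm,
    mul_left_inj' (pow_ne_zero 2 (norm_ne_zero_iff.mpr hc)), FSq_zero_eq_iff htt kt hbound]
  exact forall_congr' fun j => hderiv j ▸ hschwarz j
end

section
/- For every z in the open unit polydisc P_m, p(z)^2/(1-p(z)^2)^2 ≤ F_{t,k}^2(z; z) ≤ ((m + t m^{1/k})/(1+t)) · p(z)^2/(1-p(z)^2)^2, where p(z) = max_l |z^l| and F_{t,k}^2(z;v) = (1/(1+t))( Σ_l |v^l|^2/(1-|z^l|^2)^2 + t (Σ_l |v^l|^{2k}/(1-|z^l|^2)^{2k})^{1/k} ). -/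
noncomputable def diskDensity (x : ℝ) : ℝ := x / (1 - x ^ 2)

theorem diskDensity_monotoneOn : MonotoneOn diskDensity (Set.Ico 0 1) := by
  rintro a ⟨ha, -⟩ b ⟨-, hb⟩ hab
  have hb' : 0 < 1 - b ^ 2 := by nlinarith
  have ha' : 0 < 1 - a ^ 2 := by nlinarith
  rw [diskDensity, diskDensity, div_le_div_iff₀ ha' hb']
  nlinarith [mul_nonneg (mul_nonneg ha (ha.trans hab)) (sub_nonneg.2 hab)]

theorem diskDensity_nonneg {x : ℝ} (h0 : 0 ≤ x) (h1 : x < 1) : 0 ≤ diskDensity x :=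
  div_nonneg h0 (by nlinarith)

noncomputable def mixedNorm {ι : Type*} [Fintype ι] (t : ℝ) (k : ℕ) (f : ι → ℝ) : ℝ :=
  (1 / (1 + t)) * (∑ i, f i + t * (∑ i, f i ^ k) ^ (k⁻¹ : ℝ))

theorem FSq_self_eq_mixedNorm (m : ℕ) (t : ℝ) (k : ℕ) (z : Fin m → ℂ) :
    FSq m t k z z = mixedNorm t k (fun l => diskDensity ‖z l‖ ^ 2) := by
  simp only [FSq, mixedNorm, diskDensity, div_pow, ← pow_mul, mul_comm 2 k, one_div]

section MixedNorm

variable {ι : Type*} [Fintype ι] {f : ι → ℝ} {k : ℕ}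

theorem le_sum_pow_rpow_inv (hf : ∀ i, 0 ≤ f i) (hk : k ≠ 0) (i₀ : ι) :
    f i₀ ≤ (∑ i, f i ^ k) ^ (k⁻¹ : ℝ) := by
  calc f i₀ = (f i₀ ^ k) ^ (k⁻¹ : ℝ) := (Real.pow_rpow_inv_natCast (hf i₀) hk).symm
    _ ≤ (∑ i, f i ^ k) ^ (k⁻¹ : ℝ) := by
      gcongr
      · exact pow_nonneg (hf i₀) k
      exact Finset.single_le_sum (fun i _ => pow_nonneg (hf i) k) (Finset.mem_univ i₀)

theorem sum_pow_rpow_inv_le (hf : ∀ i, 0 ≤ f i) (hk : k ≠ 0) {M : ℝ} (hM : 0 ≤ M)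
    (hfM : ∀ i, f i ≤ M) :
    (∑ i, f i ^ k) ^ (k⁻¹ : ℝ) ≤ (Fintype.card ι : ℝ) ^ (k⁻¹ : ℝ) * M := by
  calc (∑ i, f i ^ k) ^ (k⁻¹ : ℝ) ≤ (Fintype.card ι * M ^ k) ^ (k⁻¹ : ℝ) := by
        gcongr
        · exact Finset.sum_nonneg fun i _ => pow_nonneg (hf i) k
        · simpa using Finset.sum_le_card_nsmul Finset.univ (fun i => f i ^ k) (M ^ k)
            fun i _ => pow_le_pow_left₀ (hf i) (hfM i) k
    _ = (Fintype.card ι : ℝ) ^ (k⁻¹ : ℝ) * M := by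
      rw [Real.mul_rpow (by positivity) (by positivity), Real.pow_rpow_inv_natCast hM hk]

variable {t : ℝ}

theorem le_mixedNorm (hf : ∀ i, 0 ≤ f i) (ht : 0 ≤ t) (hk : k ≠ 0) (i₀ : ι) :
    f i₀ ≤ mixedNorm t k f := by
  have hsum : f i₀ ≤ ∑ i, f i := Finset.single_le_sum (fun i _ => hf i) (Finset.mem_univ i₀)
  have hnorm := mul_le_mul_of_nonneg_left (le_sum_pow_rpow_inv hf hk i₀) ht
  rw [mixedNorm, one_div_mul_eq_div, le_div_iff₀ (by linarith)]
  linarith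

theorem mixedNorm_le (hf : ∀ i, 0 ≤ f i) (ht : 0 ≤ t) (hk : k ≠ 0) {M : ℝ} (hM : 0 ≤ M)
    (hfM : ∀ i, f i ≤ M) :
    mixedNorm t k f ≤
      ((Fintype.card ι + t * (Fintype.card ι : ℝ) ^ (k⁻¹ : ℝ)) / (1 + t)) * M := by
  have hsum : ∑ i, f i ≤ Fintype.card ι * M := by
    simpa using Finset.sum_le_card_nsmul Finset.univ f M fun i _ => hfM i
  have hnorm := mul_le_mul_of_nonneg_left (sum_pow_rpow_inv_le hf hk hM hfM) ht
  rw [mixedNorm, one_div_mul_eq_div, div_mul_eq_mul_div]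
  gcongr
  linarith

end MixedNorm

/-- `p(z)²/(1-p(z)²)² ≤ F²_{t,k}(z;z) ≤ ((m + t m^{1/k})/(1+t)) · p(z)²/(1-p(z)²)²`. -/
theorem FSq_radial_bounds (m : ℕ) [NeZero m] (t : ℝ) (ht : 0 ≤ t) (k : ℕ) (hk : 2 ≤ k) :
    ∀ z ∈ polydisc m,
      (Finset.univ.sup' Finset.univ_nonempty (fun l => ‖z l‖))^2 /
          (1 - (Finset.univ.sup' Finset.univ_nonempty (fun l => ‖z l‖))^2)^2
        ≤ FSq m t k z z ∧
      FSq m t k z z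
        ≤ ((m + t * (m:ℝ) ^ ((1:ℝ)/k))/(1+t)) *
          ((Finset.univ.sup' Finset.univ_nonempty (fun l => ‖z l‖))^2 /
            (1 - (Finset.univ.sup' Finset.univ_nonempty (fun l => ‖z l‖))^2)^2) := by
  intro z hz
  obtain ⟨l₀, -, hl₀⟩ := Finset.univ.exists_mem_eq_sup' Finset.univ_nonempty fun l => ‖z l‖
  rw [hl₀, ← div_pow, FSq_self_eq_mixedNorm]
  change diskDensity ‖z l₀‖ ^ 2 ≤ _ ∧ _ ≤ _ * diskDensity ‖z l₀‖ ^ 2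
  have hmem : ∀ l, ‖z l‖ ∈ Set.Ico (0 : ℝ) 1 := fun l => ⟨norm_nonneg _, hz l⟩
  have hf : ∀ l, 0 ≤ diskDensity ‖z l‖ ^ 2 := fun l => sq_nonneg _
  have hmax : ∀ l, diskDensity ‖z l‖ ^ 2 ≤ diskDensity ‖z l₀‖ ^ 2 := fun l => by
    have hle : ‖z l‖ ≤ ‖z l₀‖ := hl₀ ▸ Finset.le_sup' (fun l => ‖z l‖) (Finset.mem_univ l)
    exact pow_le_pow_left₀ (diskDensity_nonneg (hmem l).1 (hmem l).2)
      (diskDensity_monotoneOn (hmem l) (hmem l₀) hle) 2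
  have hk0 : k ≠ 0 := by omega
  exact ⟨le_mixedNorm hf ht hk0 l₀, by simpa using mixedNorm_le hf ht hk0 (hf l₀) hmax⟩
end
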